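/- arXiv:2407.02426 — 3 statements merged into one kernel-verified Lean document; each statement's English description precedes it below -/
import Mathlib

section
/- If S is a state to which the Overflow rule applies (its leftmost entry is odd and all other entries are even), then n(S) = 2^{ℓ(S)} − 1 and σ(S) = +1; moreover n(P(S)) = 0, ℓ(P(S)) = ℓ(S) + 1, and σ(P(S)) = −1. -/
open scoped Classical

namespace Skelet17

/-- The five kinds of transition rules. -/
inductive Rule
  | overflow | halt | zero | halve | increment
  deriving DecidableEq

/-- A state `(a_ℓ, …, a_1, a_0)` (written left to right, `a_0` rightmost) is stored
as the list `[a_0, a_1, …, a_ℓ]`, i.e. with the *rightmost* entry first. -/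
abbrev State := List ℤ

/-- The leftmost entry `a_ℓ` of a state. -/
def leftmost (S : State) : ℤ := S.getLastD 0

/-- The entry `a_i(S)`. -/
def entry (S : State) (i : ℕ) : ℤ := S.getD i 0

/-- `ℓ(S) = |S| - 1`. -/
def ell (S : State) : ℕ := S.length - 1

/-- The Overflow rule applies: the leftmost entry is odd and all other entries are even. -/
def OverflowCond (S : State) : Prop := Odd (leftmost S) ∧ ∀ x ∈ S.dropLast, Even x

/-- The Halt rule applies: all entries are even and the two leftmost entries are `0`. -/
def HaltCond (S : State) : Prop :=
  (∀ x ∈ S, Even x) ∧ S.getLastD 1 = 0 ∧ S.dropLast.getLastD 1 = 0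

/-- The Zero rule applies: all entries are even and the Halt rule does not apply. -/
def ZeroCond (S : State) : Prop := (∀ x ∈ S, Even x) ∧ ¬ HaltCond S

/-- The Halve rule applies: `a_0 = -1` and none of the earlier rules applies. -/
def HalveCond (S : State) : Prop :=
  ¬ OverflowCond S ∧ ¬ HaltCond S ∧ ¬ ZeroCond S ∧ S.headD 0 = -1

/-- The rule applied to a state (the first matching rule). -/
noncomputable def ruleOf (S : State) : Rule :=
  if OverflowCond S then .overflow
  else if HaltCond S then .halt
  else if ZeroCond S then .zero
  else if S.headD 0 = -1 then .halve
  else .increment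

/-- The transition function `P`.  (On a Halt state the process stops; we set `P S = S` there.)
Recall the list stores `a_0` first, so e.g. the Overflow rule
`(2a_ℓ+1, 2a_{ℓ-1}, …, 2a_0) ↦ (0, 2a_ℓ+2, 2a_{ℓ-1}, …, 2a_0)` appends a `0` at the end of
the list and adds `1` to the previously last element. -/
noncomputable def P (S : State) : State :=
  match ruleOf S with
  | .overflow => S.dropLast ++ [leftmost S + 1, 0]
  | .halt => S
  | .zero => (S.set 0 (S.headD 0 - 1)).set (S.length - 1) (leftmost S + 1) ++ [0, 0]
  | .halve => S.tail
  | .increment =>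
      let i := S.findIdx (fun x => x % 2 != 0)   -- index of the rightmost odd entry
      (S.set (i + 1) (S.getD (i + 1) 0 + 1)).set 0 (S.headD 0 - 1)

/-- `S ↦ T` : some iterate of `P` sends `S` to `T`. -/
def Reaches (S T : State) : Prop := ∃ m : ℕ, P^[m] S = T

/-- `σ(S) = +1` if the sum of the entries is odd, `-1` if it is even. -/
noncomputable def sigma (S : State) : ℤ := if Odd S.sum then 1 else -1

/-- `n(S)`: the natural number whose Gray code digits (least significant first) are
`a_1 mod 2, a_2 mod 2, …, a_ℓ mod 2`.  Equivalently (standard Gray-code decoding),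
bit `i` of `n(S)` is the parity of `a_{i+1} + ⋯ + a_ℓ`. -/
def nOf (S : State) : ℕ :=
  ∑ i ∈ Finset.range (ell S),
    2 ^ i * ((∑ j ∈ Finset.Icc (i + 1) (ell S), entry S j) % 2).toNat

/-- `⟨a / 2^j⟩` : the nearest integer to `a / 2^j`, rounding half-integers up. -/
def nearest (j a : ℕ) : ℕ := (2 * a + 2 ^ j) / 2 ^ (j + 1)

/-- `d_j(a, b) = |⟨a/2^j⟩ - ⟨b/2^j⟩|`. -/
def dd (j a b : ℕ) : ℕ := Nat.dist (nearest j a) (nearest j b)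

/-- `S_k = (0, 2, 2^2, …, 2^{2k}, 0)`. -/
def Sk (k : ℕ) : State :=
  0 :: (((List.range (2 * k)).map fun i => (2 : ℤ) ^ (2 * k - i)) ++ [0])

/-- An empty state: `n(E) = 0`, `σ(E) = -1`, and the next rule applied is not Halt. -/
def IsEmptyState (E : State) : Prop :=
  E ≠ [] ∧ nOf E = 0 ∧ sigma E = -1 ∧ ruleOf E ≠ Rule.halt

/-- `m` is the first positive time at which the trajectory of `E` is at an empty state. -/
def NextEmptyAt (E : State) (m : ℕ) : Prop :=
  0 < m ∧ IsEmptyState (P^[m] E) ∧ ∀ t, 0 < t → t < m → ¬ IsEmptyState (P^[t] E)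

/-- `N(E)` : the next empty state after `E` (junk value `[]` if it does not exist). -/
noncomputable def N (E : State) : State :=
  if h : ∃ m, NextEmptyAt E m then P^[h.choose] E else []

/-- The rule applied at time `j` belongs to `T_E`, the sequence of rules from `E` to the
next empty state after `E` (all rules after `E` when no next empty state exists). -/
def InTE (E : State) (j : ℕ) : Prop := ∀ t, 0 < t → t ≤ j → ¬ IsEmptyState (P^[t] E)

/-- Weakly embanked: `T_E` consists of one Zero rule at the start and contains at least two
Halve rules, and all other rules before the second Halve rule are Increment rules. -/
def WeaklyEmbanked (E : State) : Prop :=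
  IsEmptyState E ∧
  ∃ j₁ j₂, 0 < j₁ ∧ j₁ < j₂ ∧ InTE E j₂ ∧
    ruleOf (P^[j₁] E) = Rule.halve ∧ ruleOf (P^[j₂] E) = Rule.halve ∧
    ∀ t, 0 < t → t < j₂ → t ≠ j₁ → ruleOf (P^[t] E) = Rule.increment

/-- Embanked: the next empty state `N(E)` exists and the non-Increment rules of `T_E` consist
of exactly one Zero rule at the start and exactly two Halve rules elsewhere. -/
def Embanked (E : State) : Prop :=
  IsEmptyState E ∧
  ∃ m j₁ j₂, NextEmptyAt E m ∧ 0 < j₁ ∧ j₁ < j₂ ∧ j₂ < m ∧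
    ruleOf (P^[j₁] E) = Rule.halve ∧ ruleOf (P^[j₂] E) = Rule.halve ∧
    ∀ t, 0 < t → t < m → t ≠ j₁ → t ≠ j₂ → ruleOf (P^[t] E) = Rule.increment

/-- `h_i(E)` (`i ∈ {1,2}`): the value of `n` at the state immediately *after* the `i`-th
Halve rule applied after `E`. -/
noncomputable def hVal (E : State) (i : ℕ) : ℕ :=
  nOf (P^[Nat.nth (fun j => ruleOf (P^[j] E) = Rule.halve) (i - 1) + 1] E)

/-- `s_i(E)` (`i ∈ {1,2}`): the value of `n` at the state immediately *before* the `i`-th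
Halve rule applied after `E`. -/
noncomputable def sVal (E : State) (i : ℕ) : ℕ :=
  nOf (P^[Nat.nth (fun j => ruleOf (P^[j] E) = Rule.halve) (i - 1)] E)

/-- `E[i]` : the state `E` with the entry `a_i` replaced by `a_i + 2`. -/
def bump (E : State) (i : ℕ) : State := E.set i (E.getD i 0 + 2)

/-- `N'(E) = N^{⌈(i+1)/2⌉}(E)` for an embanked state `E` with `N(E) = E[i]`
(junk value `E` if no such `i` exists). -/
noncomputable def N' (E : State) : State :=
  if h : ∃ i, i < E.length ∧ N E = bump E i then N^[(h.choose + 2) / 2] E else E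

/-- A rooted embanked state: an embanked state obtained from `S_k` by applying `N'`
some number of times. -/
def RootedEmbanked (k : ℕ) (E : State) : Prop :=
  Embanked E ∧ ∃ e : ℕ, N'^[e] (Sk k) = E

/-- `κ_{E→E'}(j)` : the number of steps `S ↦ N(S)` with `N(S) = S[j]` along the chain
`E, N(E), N²(E), …, N^[t](E) = E'`. -/
noncomputable def kappa (E : State) (t j : ℕ) : ℕ :=
  ((Finset.range t).filter fun s => N (N^[s] E) = bump (N^[s] E) j).card

/-! Only the leftmost entry of `S` is odd, so every suffix sum `a_{i+1} + ⋯ + a_ℓ` is odd: every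
Gray-code bit of `n(S)` decodes to `1`, and the total sum is odd. Overflow makes the leftmost
entry even and appends a `0`, so afterwards all entries are even, which forces `n = 0` and
`σ = -1`. -/

lemma even_sum_of_forall_even {l : List ℤ} (h : ∀ x ∈ l, Even x) : Even l.sum :=
  even_iff_two_dvd.2 (List.dvd_sum fun x hx => (h x hx).two_dvd)

lemma entry_mem {S : State} {j : ℕ} (hj : j < S.length) : entry S j ∈ S := by
  rw [entry, List.getD_eq_getElem S 0 hj]
  exact List.getElem_mem hj

lemma nOf_eq_zero_of_forall_even {S : State} (hS : ∀ x ∈ S, Even x) : nOf S = 0 := by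
  refine Finset.sum_eq_zero fun i _ => ?_
  have hbit : Even (∑ j ∈ Finset.Icc (i + 1) (ell S), entry S j) := by
    refine Finset.even_sum _ fun j _ => ?_
    rcases lt_or_ge j S.length with hj | hj
    · exact hS _ (entry_mem hj)
    · rw [entry, List.getD_eq_default S 0 hj]
      exact Even.zero
  simp [Int.even_iff.1 hbit]

lemma sigma_eq_neg_one_of_forall_even {S : State} (hS : ∀ x ∈ S, Even x) : sigma S = -1 :=
  if_neg (Int.not_odd_iff_even.2 (even_sum_of_forall_even hS))

lemma nOf_eq_two_pow_sub_one {S : State}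
    (hS : ∀ i < ell S, Odd (∑ j ∈ Finset.Icc (i + 1) (ell S), entry S j)) :
    nOf S = 2 ^ ell S - 1 := by
  have hbits : ∀ i ∈ Finset.range (ell S),
      2 ^ i * ((∑ j ∈ Finset.Icc (i + 1) (ell S), entry S j) % 2).toNat = 2 ^ i := by
    intro i hi
    simp [Int.odd_iff.1 (hS i (Finset.mem_range.1 hi))]
  rw [nOf, Finset.sum_congr rfl hbits, Nat.geomSum_eq le_rfl]
  simp

namespace OverflowCond

variable {S : State} (h : OverflowCond S)
include h

lemma ne_nil : S ≠ [] := by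
  rintro rfl
  exact Int.not_odd_zero h.1

lemma leftmost_eq_getLast : leftmost S = S.getLast h.ne_nil := by
  rw [leftmost, List.getLastD_eq_getLast?, List.getLast?_eq_some_getLast h.ne_nil, Option.getD_some]

lemma ell_lt_length : ell S < S.length := by
  have := List.length_pos_of_ne_nil h.ne_nil
  unfold ell
  omega

lemma odd_entry_ell : Odd (entry S (ell S)) := by
  rw [entry, List.getD_eq_getElem S 0 h.ell_lt_length]
  exact (List.getLast_eq_getElem h.ne_nil ▸ h.leftmost_eq_getLast) ▸ h.1

lemma even_entry {j : ℕ} (hj : j < ell S) : Even (entry S j) := by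
  have hj' : j < S.dropLast.length := by rwa [List.length_dropLast]
  rw [entry, List.getD_eq_getElem S 0 (hj.trans h.ell_lt_length), ← List.getElem_dropLast hj']
  exact h.2 _ (List.getElem_mem hj')

lemma odd_sum_Icc_entry {i : ℕ} (hi : i < ell S) :
    Odd (∑ j ∈ Finset.Icc (i + 1) (ell S), entry S j) := by
  obtain ⟨k, hk⟩ : ∃ k, ell S = k + 1 := ⟨ell S - 1, by omega⟩
  rw [hk, Finset.sum_Icc_succ_top (by omega)]
  refine Even.add_odd (Finset.even_sum _ fun j hj => h.even_entry ?_) (hk ▸ h.odd_entry_ell)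
  rw [Finset.mem_Icc] at hj
  omega

lemma odd_sum : Odd S.sum := by
  rw [← List.dropLast_append_getLast h.ne_nil, List.sum_append, List.sum_singleton,
    ← h.leftmost_eq_getLast]
  exact (even_sum_of_forall_even h.2).add_odd h.1

lemma P_eq : P S = S.dropLast ++ [leftmost S + 1, 0] := by
  rw [P, show ruleOf S = .overflow from if_pos h]

lemma forall_even_P : ∀ x ∈ P S, Even x := by
  intro x hx
  rw [h.P_eq, List.mem_append, List.mem_cons, List.mem_singleton] at hx
  rcases hx with hx | rfl | rfl
  · exact h.2 x hx
  · exact h.1.add_one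
  · exact Even.zero

lemma ell_P : ell (P S) = ell S + 1 := by
  have := h.ell_lt_length
  simp only [ell, h.P_eq, List.length_append, List.length_dropLast, List.length_cons,
    List.length_nil] at this ⊢
  omega

end OverflowCond

theorem statement_2_general (S : State) (h : OverflowCond S) :
    nOf S = 2 ^ ell S - 1 ∧ sigma S = 1 ∧
      nOf (P S) = 0 ∧ ell (P S) = ell S + 1 ∧ sigma (P S) = -1 :=
  ⟨nOf_eq_two_pow_sub_one fun _ => h.odd_sum_Icc_entry, if_pos h.odd_sum,
    nOf_eq_zero_of_forall_even h.forall_even_P, h.ell_P,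
    sigma_eq_neg_one_of_forall_even h.forall_even_P⟩

/-- If the Overflow rule applies to `S`, then `n(S) = 2^{ℓ(S)} - 1` and
`σ(S) = +1`; moreover `n(P(S)) = 0`, `ℓ(P(S)) = ℓ(S) + 1` and `σ(P(S)) = -1`. -/
theorem statement_2 (S : State) (hS : S ≠ []) (h : OverflowCond S) :
    nOf S = 2 ^ ell S - 1 ∧ sigma S = 1 ∧
      nOf (P S) = 0 ∧ ell (P S) = ell S + 1 ∧ sigma (P S) = -1 :=
  statement_2_general S h

end Skelet17
end

section
/- If S is a state to which the Halve rule applies (a_0 = −1 and none of the Overflow, Halt, Zero rules applies), then n(P(S)) = ⌊n(S)/2⌋, ℓ(P(S)) = ℓ(S) − 1, and σ(P(S)) = −σ(S). -/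
open scoped Classical

namespace Skelet17

/-! Halve deletes the entry `a_0 = -1`. Deleting the lowest entry shifts the Gray code of the
state one place to the right (`nOf_cons`), so `n` is halved, and removing an odd summand flips
the parity of the entry sum, so `σ` changes sign. -/

theorem sum_Icc_entry_cons (a : ℤ) (T : State) (i k : ℕ) :
    ∑ j ∈ Finset.Icc (i + 1) (k + 1), entry (a :: T) j = ∑ j ∈ Finset.Icc i k, entry T j := by
  rw [← Finset.map_add_right_Icc, Finset.sum_map]
  rfl

theorem sum_range_length_entry (T : State) :
    ∑ j ∈ Finset.range T.length, entry T j = T.sum := by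
  induction T with
  | nil => rfl
  | cons a T ih =>
    rw [List.length_cons, Finset.sum_range_succ', List.sum_cons, add_comm]
    exact congrArg (a + ·) ih

theorem nOf_cons (a : ℤ) (T : State) : nOf (a :: T) = 2 * nOf T + (T.sum % 2).toNat := by
  cases T with
  | nil => simp [nOf, ell]
  | cons b T =>
    simp only [nOf, ell, List.length_cons, Nat.add_sub_cancel]
    rw [Finset.sum_range_succ', ← zero_add 1, sum_Icc_entry_cons, zero_add,
      ← Nat.range_succ_eq_Icc_zero, ← List.length_cons (a := b) (as := T),
      sum_range_length_entry, Finset.mul_sum]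
    simp only [List.length_cons, sum_Icc_entry_cons, pow_succ', pow_zero, one_mul, mul_assoc]

theorem nOf_cons_div_two (a : ℤ) (T : State) : nOf (a :: T) / 2 = nOf T := by
  rw [nOf_cons]
  omega

theorem sigma_cons_of_odd {a : ℤ} (ha : Odd a) (T : State) : sigma (a :: T) = -sigma T := by
  have hodd : Odd (a + T.sum) ↔ ¬Odd T.sum := by
    rw [Int.odd_add, Int.not_odd_iff_even]
    exact iff_true_left ha
  unfold sigma
  rw [List.sum_cons]
  split_ifs <;> simp_all

theorem ruleOf_of_halveCond {S : State} (h : HalveCond S) : ruleOf S = .halve := by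
  obtain ⟨hO, hH, hZ, hhead⟩ := h
  simp only [ruleOf, if_neg hO, if_neg hH, if_neg hZ, if_pos hhead]

theorem P_of_halveCond {S : State} (h : HalveCond S) : P S = S.tail := by
  rw [P, ruleOf_of_halveCond h]

theorem statement_4_general (S : State) (h : HalveCond S) :
    nOf (P S) = nOf S / 2 ∧ ell (P S) = ell S - 1 ∧ sigma (P S) = -sigma S := by
  obtain ⟨T, rfl⟩ : ∃ T, S = -1 :: T := by
    cases S with
    | nil => exact absurd h.2.2.2 (by decide)
    | cons a T => exact ⟨T, by rw [← h.2.2.2]; rfl⟩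
  rw [P_of_halveCond h, List.tail_cons]
  refine ⟨(nOf_cons_div_two _ T).symm, by simp [ell], ?_⟩
  rw [sigma_cons_of_odd odd_neg_one, neg_neg]

/-- If the Halve rule applies to `S` (`a_0 = -1` and none of the Overflow,
Halt, Zero rules applies), then `n(P(S)) = ⌊n(S)/2⌋`, `ℓ(P(S)) = ℓ(S) - 1` and
`σ(P(S)) = -σ(S)`. -/
theorem statement_4 (S : State) (hS : S ≠ []) (h : HalveCond S) :
    nOf (P S) = nOf S / 2 ∧ ell (P S) = ell S - 1 ∧ sigma (P S) = -sigma S :=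
  statement_4_general S h

end Skelet17
end

section
/- If S is a state to which the Increment rule applies (none of the Overflow, Halt, Zero, Halve rules applies), then n(P(S)) = n(S) + σ(S), ℓ(P(S)) = ℓ(S), and σ(P(S)) = σ(S). -/
open scoped Classical

namespace Skelet17

/-! Let `a_i` be the first odd entry of `S` (its rightmost odd entry in the paper's notation).
The Increment rule adds `1` to `a_{i+1}` and `-1` to `a_0`, so the entry sum is unchanged, while
the suffix sum `a_{b+1} + ⋯ + a_ℓ`, whose parity is bit `b` of `n`, grows by one exactly for
`b ≤ i`. As `a_0, …, a_{i-1}` are even and `a_i` is odd, bits `0, …, i-1` of `n` are the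
complement of bit `i`, so flipping bits `0, …, i` changes `n` by `+1` if bit `i` was `0` and by
`-1` otherwise; the same parity decides whether the entry sum is odd, i.e. the sign `σ(S)`. -/

section GrayCode

open Finset

def tailSum (f : ℕ → ℤ) (l b : ℕ) : ℤ := ∑ j ∈ Icc (b + 1) l, f j

def grayDecode (f : ℕ → ℤ) (l : ℕ) : ℕ := ∑ b ∈ range l, 2 ^ b * (tailSum f l b % 2).toNat

theorem grayDecode_cast (f : ℕ → ℤ) (l : ℕ) :
    (grayDecode f l : ℤ) = ∑ b ∈ range l, 2 ^ b * (tailSum f l b % 2) := by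
  simp [grayDecode, Int.toNat_of_nonneg (Int.emod_nonneg _ two_ne_zero)]

theorem sum_Ico_emod_two_of_first_odd {f : ℕ → ℤ} {a i m : ℕ} (hai : a ≤ i) (him : i < m)
    (heven : ∀ j < i, Even (f j)) (hodd : Odd (f i)) :
    (∑ j ∈ Ico a m, f j) % 2 = 1 - (∑ j ∈ Ico (i + 1) m, f j) % 2 := by
  obtain ⟨k, hk⟩ : Even (∑ j ∈ Ico a i, f j) :=
    even_sum _ fun j hj => heven j (mem_Ico.mp hj).2
  obtain ⟨c, hc⟩ := hodd
  rw [← sum_Ico_consecutive f (by omega : a ≤ i + 1) him, sum_Ico_succ_top hai, hk, hc]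
  omega

variable {f g : ℕ → ℤ} {l i : ℕ}

theorem tailSum_emod_two_of_lt (hil : i < l + 1) (heven : ∀ j < i, Even (f j)) (hodd : Odd (f i))
    {b : ℕ} (hbi : b < i) : tailSum f l b % 2 = 1 - tailSum f l i % 2 := by
  simp only [tailSum, ← Ico_add_one_right_eq_Icc]
  exact sum_Ico_emod_two_of_first_odd hbi hil heven hodd

theorem sum_range_emod_two_of_first_odd (hil : i < l + 1) (heven : ∀ j < i, Even (f j))
    (hodd : Odd (f i)) : (∑ j ∈ range (l + 1), f j) % 2 = 1 - tailSum f l i % 2 := by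
  rw [range_eq_Ico, tailSum, ← Ico_add_one_right_eq_Icc]
  exact sum_Ico_emod_two_of_first_odd (Nat.zero_le i) hil heven hodd

theorem sum_range_of_increment (hil : i < l)
    (hg : ∀ j, g j = f j + (if j = i + 1 then 1 else 0) - (if j = 0 then 1 else 0)) :
    ∑ j ∈ range (l + 1), g j = ∑ j ∈ range (l + 1), f j := by
  simp [hg, sum_add_distrib, sum_sub_distrib, hil]

theorem tailSum_of_increment (hil : i < l)
    (hg : ∀ j, g j = f j + (if j = i + 1 then 1 else 0) - (if j = 0 then 1 else 0)) (b : ℕ) :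
    tailSum g l b = tailSum f l b + if b ≤ i then 1 else 0 := by
  have hi : i + 1 ∈ Icc (b + 1) l ↔ b ≤ i := by rw [mem_Icc]; omega
  simp only [tailSum, hg, sum_sub_distrib, sum_add_distrib, sum_ite_eq', hi]
  simp

theorem grayDecode_of_increment (hil : i < l) (heven : ∀ j < i, Even (f j)) (hodd : Odd (f i))
    (hg : ∀ j, g j = f j + (if j = i + 1 then 1 else 0) - (if j = 0 then 1 else 0)) :
    (grayDecode g l : ℤ) = grayDecode f l + (1 - 2 * (tailSum f l i % 2)) := by
  set e := 1 - 2 * (tailSum f l i % 2)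
  set D : ℕ → ℤ := fun b => 2 ^ b * (tailSum g l b % 2 - tailSum f l b % 2)
  have hD_gt : ∀ b, i < b → D b = 0 := fun b hb => by
    simp [D, tailSum_of_increment hil hg, hb.not_ge]
  have hD_le : ∀ b, b ≤ i → D b = 2 ^ b * (1 - 2 * (tailSum f l b % 2)) := fun b hb => by
    simp only [D, tailSum_of_increment hil hg, if_pos hb]
    congr 1
    omega
  have hD_lt : ∀ b ∈ range i, D b = -e * 2 ^ b := fun b hb => by
    have hb := mem_range.mp hb
    rw [hD_le b hb.le, tailSum_emod_two_of_lt (by omega) heven hodd hb]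
    ring
  calc (grayDecode g l : ℤ)
      = grayDecode f l + ∑ b ∈ range l, D b := by
        simp only [grayDecode_cast, D, mul_sub, sum_sub_distrib]
        ring
    _ = grayDecode f l + ∑ b ∈ range (i + 1), D b := by
        rw [← sum_range_add_sum_Ico D hil, sum_eq_zero fun b hb => hD_gt b (mem_Ico.mp hb).1,
          add_zero]
    _ = grayDecode f l + (-e * ∑ b ∈ range i, (2 : ℤ) ^ b + e * 2 ^ i) := by
        rw [sum_range_succ, sum_congr rfl hD_lt, mul_sum, hD_le i le_rfl, mul_comm]
    _ = grayDecode f l + e := by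
        have := geom_sum_mul (2 : ℤ) i
        linear_combination -e * this

end GrayCode

section IncrementRule

open Finset

def oddIdx (S : State) : ℕ := S.findIdx (fun x => x % 2 != 0)

theorem entry_set {S : State} {k : ℕ} (hk : k < S.length) (a : ℤ) (j : ℕ) :
    entry (S.set k a) j = if j = k then a else entry S j := by
  by_cases hj : j = k
  · subst hj; simp [entry, List.getD_eq_getElem?_getD, hk]
  · simp [entry, List.getD_eq_getElem?_getD, Ne.symm hj, hj]

theorem nOf_eq_grayDecode (S : State) : nOf S = grayDecode (entry S) (ell S) := rfl

theorem sum_eq_sum_range_entry (S : State) : S.sum = ∑ j ∈ range S.length, entry S j := by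
  induction S with
  | nil => simp
  | cons x xs ih => simp [sum_range_succ', ih, add_comm, entry]

theorem sigma_eq (S : State) : sigma S = 2 * (S.sum % 2) - 1 := by
  rcases Int.emod_two_eq S.sum with h | h <;> simp [sigma, Int.odd_iff, h]

theorem exists_odd_of_not_zeroCond {S : State} (hH : ¬ HaltCond S) (hZ : ¬ ZeroCond S) :
    ∃ x ∈ S, Odd x := by
  by_contra! h
  exact hZ ⟨fun x hx => Int.not_odd_iff_even.mp (h x hx), hH⟩

variable {S : State}

theorem oddIdx_lt_length (hodd : ∃ x ∈ S, Odd x) : oddIdx S < S.length :=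
  List.findIdx_lt_length_of_exists (by simpa [Int.odd_iff] using hodd)

theorem odd_entry_oddIdx (hodd : ∃ x ∈ S, Odd x) : Odd (entry S (oddIdx S)) := by
  have h := List.findIdx_getElem (w := oddIdx_lt_length hodd)
  rw [entry, List.getD_eq_getElem _ _ (oddIdx_lt_length hodd), Int.odd_iff]
  simp only [bne_iff_ne, ne_eq, Int.emod_two_ne_zero] at h
  exact h

theorem even_entry_of_lt_oddIdx {j : ℕ} (hj : j < oddIdx S) : Even (entry S j) := by
  have hjS : j < S.length := hj.trans_le (List.findIdx_le_length)
  have h := List.not_of_lt_findIdx hj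
  rw [entry, List.getD_eq_getElem _ _ hjS, Int.even_iff]
  simpa using h

theorem leftmost_eq_entry (S : State) : leftmost S = entry S (S.length - 1) := by
  rw [leftmost, entry, List.getLastD_eq_getLast?, List.getLast?_eq_getElem?,
    List.getD_eq_getElem?_getD]

theorem oddIdx_add_one_lt_length (hO : ¬ OverflowCond S) (hodd : ∃ x ∈ S, Odd x) :
    oddIdx S + 1 < S.length := by
  by_contra! hlast
  have hi : oddIdx S = S.length - 1 := by have := oddIdx_lt_length hodd; omega
  refine hO ⟨leftmost_eq_entry S ▸ hi ▸ odd_entry_oddIdx hodd, fun x hx => ?_⟩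
  obtain ⟨j, hj, rfl⟩ := List.mem_iff_getElem.mp hx
  rw [List.length_dropLast] at hj
  rw [List.getElem_dropLast, ← List.getD_eq_getElem _ 0]
  exact even_entry_of_lt_oddIdx (by omega)

theorem P_of_increment (hr : ruleOf S = .increment) :
    P S = (S.set (oddIdx S + 1) (entry S (oddIdx S + 1) + 1)).set 0 (entry S 0 - 1) := by
  unfold P
  rw [hr]
  cases S <;> rfl

theorem length_P_of_increment (hr : ruleOf S = .increment) : (P S).length = S.length := by
  simp [P_of_increment hr]

theorem entry_P_of_increment (hr : ruleOf S = .increment) (hi : oddIdx S + 1 < S.length)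
    (j : ℕ) : entry (P S) j =
      entry S j + (if j = oddIdx S + 1 then 1 else 0) - (if j = 0 then 1 else 0) := by
  rw [P_of_increment hr, entry_set (by rw [List.length_set]; omega), entry_set hi]
  split_ifs <;> subst_vars <;> omega

end IncrementRule

theorem statement_5_general (S : State)
    (h : ¬ OverflowCond S ∧ ¬ HaltCond S ∧ ¬ ZeroCond S ∧ S.headD 0 ≠ -1) :
    (nOf (P S) : ℤ) = (nOf S : ℤ) + sigma S ∧ ell (P S) = ell S ∧ sigma (P S) = sigma S := by
  obtain ⟨hO, hH, hZ, hhead⟩ := h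
  have hr : ruleOf S = .increment := by rw [ruleOf, if_neg hO, if_neg hH, if_neg hZ, if_neg hhead]
  have hodd := exists_odd_of_not_zeroCond hH hZ
  have hi := oddIdx_add_one_lt_length hO hodd
  have hentry := entry_P_of_increment hr hi
  have heven : ∀ j < oddIdx S, Even (entry S j) := fun j => even_entry_of_lt_oddIdx
  have hell : ell (P S) = ell S := by simp [ell, length_P_of_increment hr]
  have hlen : S.length = ell S + 1 := by unfold ell; omega
  have hsum : (P S).sum = S.sum := by
    rw [sum_eq_sum_range_entry, sum_eq_sum_range_entry, length_P_of_increment hr, hlen]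
    exact sum_range_of_increment (by omega) hentry
  have hσ : sigma S = 1 - 2 * (tailSum (entry S) (ell S) (oddIdx S) % 2) := by
    rw [sigma_eq, sum_eq_sum_range_entry, hlen,
      sum_range_emod_two_of_first_odd (by omega) heven (odd_entry_oddIdx hodd)]
    ring
  refine ⟨?_, hell, by simp only [sigma, hsum]⟩
  rw [nOf_eq_grayDecode, nOf_eq_grayDecode, hell, hσ]
  exact grayDecode_of_increment (by omega) heven (odd_entry_oddIdx hodd) hentry

/-- If the Increment rule applies to `S` (none of the Overflow, Halt, Zero,
Halve rules applies), then `n(P(S)) = n(S) + σ(S)`, `ℓ(P(S)) = ℓ(S)` and `σ(P(S)) = σ(S)`. -/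
theorem statement_5 (S : State) (hS : S ≠ [])
    (h : ¬ OverflowCond S ∧ ¬ HaltCond S ∧ ¬ ZeroCond S ∧ S.headD 0 ≠ -1) :
    (nOf (P S) : ℤ) = (nOf S : ℤ) + sigma S ∧ ell (P S) = ell S ∧ sigma (P S) = sigma S :=
  statement_5_general S h

end Skelet17
end
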